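/- If a set HC of Horn clauses is syntactically solvable via an assignment p ↦ C_p, then HC has a closed abstract reachability graph, namely with predicate map Π(p) = {C_p}, node set S = {(p, {C_p}) | p ∈ R}, and the maximal edge relation consistent with the ARG conditions. -/
import Mathlib


namespace Stmt17

/- Horn clauses over a constraint language.
`S` indexes the class of structures, `U s` is the universe of structure `s`,
`V` is the set of first-order variables, `Con` the constraints (interpreted
by `interp`), `Tm` the first-order terms (evaluated by `tval`), `R` the
uninterpreted relation symbols with arities `arity`, and `xvar p` the fixed
vector of argument variables of the relation symbol `p`. -/
variable {S V Con Tm R : Type} (U : S → Type)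
  (interp : Con → (s : S) → (V → U s) → Prop)
  (tval : Tm → (s : S) → (V → U s) → U s)
  (arity : R → ℕ) (xvar : (p : R) → Fin (arity p) → V)

/-- An application p(t₁,…,tₖ) of a relation symbol to terms. -/
structure HAtom (arity : R → ℕ) (Tm : Type) : Type where
  rel : R
  args : Fin (arity rel) → Tm

/-- A Horn clause C ∧ B₁ ∧ … ∧ Bₙ → H; `head = none` encodes head `false`. -/
structure Clause (Con : Type) (arity : R → ℕ) (Tm : Type) : Type where
  c : Con
  body : List (HAtom arity Tm)
  head : Option (HAtom arity Tm)

/-- Interpretation of the relation symbols in a structure s. -/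
def RelInterp (s : S) : Type _ := ∀ p : R, (Fin (arity p) → U s) → Prop

/-- A clause holds in structure s under relation interpretation ρ. -/
def ClauseHoldsSem (s : S) (ρ : RelInterp U arity s) (cl : Clause Con arity Tm) : Prop :=
  ∀ α : V → U s,
    interp cl.c s α →
    (∀ b ∈ cl.body, ρ b.rel fun i => tval (b.args i) s α) →
    (match cl.head with
      | none => False
      | some a => ρ a.rel fun i => tval (a.args i) s α)

/-- Semantic solvability: in every structure of the class there exist
relations making all clauses true. -/
def SemSolvable (HC : List (Clause Con arity Tm)) : Prop :=
  ∀ s : S, ∃ ρ : RelInterp U arity s, ∀ cl ∈ HC, ClauseHoldsSem U interp tval arity s ρ cl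

open Classical in
/-- The assignment obtained from α by overriding the argument variables
of the relation symbol of `a` with the values of the argument terms
(semantic substitution sol(p)[t̄]). -/
noncomputable def override (s : S) (α : V → U s) (a : HAtom arity Tm) : V → U s :=
  fun v => if h : ∃ i, xvar a.rel i = v then tval (a.args (Classical.choose h)) s α else α v

/-- Instantiation sol(p)[t̄] of a relation symbol assignment at an atom. -/
def instA (sol : R → Con) (s : S) (α : V → U s) (a : HAtom arity Tm) : Prop :=
  interp (sol a.rel) s (override U tval arity xvar s α a)

/-- The instantiation sol(h) of a clause h is universally valid. -/
def ClauseHoldsSyn (sol : R → Con) (cl : Clause Con arity Tm) : Prop :=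
  ∀ (s : S) (α : V → U s),
    interp cl.c s α →
    (∀ b ∈ cl.body, instA U interp tval arity xvar sol s α b) →
    (match cl.head with
      | none => False
      | some a => instA U interp tval arity xvar sol s α a)

/-- sol(p) is a constraint "in the n free variables x̄_p": its interpretation
depends only on the designated argument variables. -/
def GoodSol (sol : R → Con) : Prop :=
  ∀ p : R, ∀ (s : S) (α β : V → U s),
    (∀ i, α (xvar p i) = β (xvar p i)) → (interp (sol p) s α ↔ interp (sol p) s β)

/-- Syntactic solvability: there is an assignment of constraints to relation
symbols validating (the universal closure of) every instantiated clause in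
every structure. -/
def SynSolvable (HC : List (Clause Con arity Tm)) : Prop :=
  ∃ sol : R → Con, GoodSol U interp arity xvar sol ∧
    ∀ cl ∈ HC, ClauseHoldsSyn U interp tval arity xvar sol cl
/-! ### Abstract reachability graphs (ARGs) -/

/-- Nodes of an ARG: a relation symbol together with a set of predicates. -/
abbrev Node (R : Type) (Con : Type) : Type := R × Finset Con

/-- Instantiation φ[t̄] of a predicate φ (over the argument variables x̄_p)
at the argument terms of the atom a. -/
def instC (q : Con) (a : HAtom arity Tm) (s : S) (α : V → U s) : Prop :=
  interp q s (override U tval arity xvar s α a)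

/-- C ∧ Q₁[t̄₁] ∧ … ∧ Qₙ[t̄ₙ]: the body of clause cl holds under the node
sequence ss, structure s and assignment α. -/
def BodyHolds (cl : Clause Con arity Tm) (ss : List (Node R Con))
    (s : S) (α : V → U s) : Prop :=
  interp cl.c s α ∧
  ∀ pr ∈ cl.body.zip ss, ∀ q ∈ pr.2.2, instC U interp tval arity xvar q pr.1 s α

/-- Q is exactly the set of predicates of Preds(p) entailed by the instantiated
body: Q = {φ ∈ Preds(p) | C ∧ Q₁[t̄₁] ∧ … ∧ Qₙ[t̄ₙ] ⊨ φ[t̄]}. -/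
def EntailedQ (Preds : R → Finset Con) (cl : Clause Con arity Tm)
    (ss : List (Node R Con)) (a : HAtom arity Tm) (Q : Finset Con) : Prop :=
  ∀ φ : Con, φ ∈ Q ↔ (φ ∈ Preds a.rel ∧
    ∀ (s : S) (α : V → U s), BodyHolds U interp tval arity xvar cl ss s α →
      instC U interp tval arity xvar φ a s α)

/-- (SS, E) is an ARG for HC over the predicate map Π: nodes are pairs (p, Q)
with Q ⊆ Preds(p), and every hyperedge is labelled by a clause of HC, matches the
body relation symbols, and its target carries exactly the entailed
predicates. -/
def IsARG (HC : List (Clause Con arity Tm)) (Preds : R → Finset Con)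
    (SS : Set (Node R Con))
    (E : List (Node R Con) → Clause Con arity Tm → Node R Con → Prop) : Prop :=
  (∀ n ∈ SS, n.2 ⊆ Preds n.1) ∧
  ∀ ss h t, E ss h t →
    h ∈ HC ∧ ss.length = h.body.length ∧ (∀ n ∈ ss, n ∈ SS) ∧
    (∀ pr ∈ h.body.zip ss, pr.1.rel = pr.2.1) ∧
    ∃ a, h.head = some a ∧ t.1 = a.rel ∧ t ∈ SS ∧
      EntailedQ U interp tval arity xvar Preds h ss a t.2

/-- The ARG is closed: for every clause of HC and every matching sequence of
nodes, either the instantiated body is unsatisfiable, or (for clauses with a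
relation symbol head) a corresponding hyperedge with the prescribed target
exists. -/
def ClosedARG (HC : List (Clause Con arity Tm)) (Preds : R → Finset Con)
    (SS : Set (Node R Con))
    (E : List (Node R Con) → Clause Con arity Tm → Node R Con → Prop) : Prop :=
  ∀ h ∈ HC, ∀ ss : List (Node R Con),
    ss.length = h.body.length → (∀ n ∈ ss, n ∈ SS) →
    (∀ pr ∈ h.body.zip ss, pr.1.rel = pr.2.1) →
    ((∀ (s : S) (α : V → U s), ¬ BodyHolds U interp tval arity xvar h ss s α) ∨
      ∃ a, h.head = some a ∧ ∃ t, E ss h t ∧ t.1 = a.rel ∧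
        EntailedQ U interp tval arity xvar Preds h ss a t.2)
/-- Lemma 2, "⇒": if HC is syntactically solvable via
p ↦ C_p, then HC has a closed ARG: take Π(p) = {C_p}, the node set
S = {(p, {C_p}) | p ∈ R}, and the maximal edge relation consistent with the
ARG conditions. -/

theorem mem_zip_of_mem_left {A B : Type} : ∀ (l1 : List A) (l2 : List B),
    l1.length = l2.length → ∀ a ∈ l1, ∃ b, (a, b) ∈ l1.zip l2 := by
  intro l1
  induction l1 with
  | nil => intro l2 _ a ha; cases ha
  | cons x xs ih =>
    intro l2 hlen a ha
    cases l2 with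
    | nil => simp at hlen
    | cons y ys =>
      simp only [List.length_cons, Nat.succ.injEq] at hlen
      rcases List.mem_cons.mp ha with rfl | ha
      · exact ⟨y, by simp⟩
      · obtain ⟨b, hb⟩ := ih ys hlen a ha
        exact ⟨b, by simp [hb]⟩

theorem stmt17 [DecidableEq Con] (HC : List (Clause Con arity Tm))
    (sol : R → Con)
    (hgood : GoodSol U interp arity xvar sol)
    (hsol : ∀ cl ∈ HC, ClauseHoldsSyn U interp tval arity xvar sol cl) :
    ∃ E : List (Node R Con) → Clause Con arity Tm → Node R Con → Prop,
      IsARG U interp tval arity xvar HC (fun p => {sol p})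
          (Set.range fun p => (p, ({sol p} : Finset Con))) E ∧
      ClosedARG U interp tval arity xvar HC (fun p => {sol p})
          (Set.range fun p => (p, ({sol p} : Finset Con))) E := by
  classical
  set SS : Set (Node R Con) := Set.range fun p => (p, ({sol p} : Finset Con)) with hSS
  -- key fact: for matching ss, BodyHolds implies the syntactic body premises
  have key : ∀ h ∈ HC, ∀ ss : List (Node R Con),
      ss.length = h.body.length → (∀ n ∈ ss, n ∈ SS) →
      (∀ pr ∈ h.body.zip ss, pr.1.rel = pr.2.1) →
      ∀ (s : S) (α : V → U s), BodyHolds U interp tval arity xvar h ss s α →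
        (match h.head with
          | none => False
          | some a => instA U interp tval arity xvar sol s α a) := by
    intro h hmem ss hlen hss hrel s α hbody
    refine hsol h hmem s α hbody.1 ?_
    intro b hb
    obtain ⟨n, hn⟩ := mem_zip_of_mem_left h.body ss hlen.symm b hb
    have hnS : n ∈ SS := hss n (List.of_mem_zip hn).2
    obtain ⟨p, hp⟩ := hnS
    have hrel' := hrel (b, n) hn
    have hsolmem : sol b.rel ∈ n.2 := by
      rw [hrel']
      rw [← hp]
      simp
    exact hbody.2 (b, n) hn (sol b.rel) hsolmem
  refine ⟨fun ss h t =>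
    h ∈ HC ∧ ss.length = h.body.length ∧ (∀ n ∈ ss, n ∈ SS) ∧
    (∀ pr ∈ h.body.zip ss, pr.1.rel = pr.2.1) ∧
    ∃ a, h.head = some a ∧ t.1 = a.rel ∧ t ∈ SS ∧
      EntailedQ U interp tval arity xvar (fun p => {sol p}) h ss a t.2, ?_, ?_⟩
  · constructor
    · rintro n ⟨p, rfl⟩
      simp
    · rintro ss h t ⟨h1, h2, h3, h4, h5⟩
      exact ⟨h1, h2, h3, h4, h5⟩
  · intro h hmem ss hlen hss hrel
    match hh : h.head with
    | none =>
      left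
      intro s α hbody
      have := key h hmem ss hlen hss hrel s α hbody
      rw [hh] at this
      exact this
    | some a =>
      right
      refine ⟨a, rfl, (a.rel, {sol a.rel}), ?_, rfl, ?_⟩
      · refine ⟨hmem, hlen, hss, hrel, a, hh, rfl, ⟨a.rel, rfl⟩, ?_⟩
        · intro φ
          simp only [Finset.mem_singleton]
          constructor
          · rintro rfl
            refine ⟨rfl, ?_⟩
            intro s α hbody
            have := key h hmem ss hlen hss hrel s α hbody
            rw [hh] at this
            exact this
          · rintro ⟨rfl, _⟩; rfl
      · intro φ
        simp only [Finset.mem_singleton]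
        constructor
        · rintro rfl
          refine ⟨rfl, ?_⟩
          intro s α hbody
          have := key h hmem ss hlen hss hrel s α hbody
          rw [hh] at this
          exact this
        · rintro ⟨rfl, _⟩; rfl


end Stmt17
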